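/- For all t > 0 with t ≠ 1, the derivative of t ↦ (4t/3 − t·F2(1/t)) equals t·F1'(1/t), where F2(s) = ((3s^4 - 2s^2 - 1)/(8s^3))·ln|(s+1)/(s-1)| + 1/(4s^2) + 7/12 and F1'(s) = ((s^2+1)/(2s^2))·ln|(s+1)/(s-1)| - 1/s. -/

import Mathlib

noncomputable def F2 (s : ℝ) : ℝ :=
  ((3*s^4 - 2*s^2 - 1)/(8*s^3)) * Real.log |(s+1)/(s-1)| + 1/(4*s^2) + 7/12

noncomputable def F1' (s : ℝ) : ℝ :=
  ((s^2 + 1)/(2*s^2)) * Real.log |(s+1)/(s-1)| - 1/s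

/-!
The logarithm `ℓ s = log |(s + 1)/(s - 1)|` is invariant under `s ↦ 1/s`, so `t * F2 (1/t)` and
`t * F1' (1/t)` are polynomials in `t` plus polynomial multiples of `ℓ t`. Since
`ℓ' t = 2/(1 - t^2)` and `t^4 + 2t^2 - 3 = (t^2 + 3)(t^2 - 1)`, the product rule makes the pole of `ℓ'`
cancel, and the rational part of the derivative collapses to `-t^2`.
-/

open Real

noncomputable def logRatio (s : ℝ) : ℝ := log |(s + 1)/(s - 1)|

lemma logRatio_one_div (x : ℝ) : logRatio (1/x) = logRatio x := by
  rcases eq_or_ne x 0 with rfl | hx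
  · simp
  have hswap : (1/x + 1)/(1/x - 1) = -((x + 1)/(x - 1)) := by
    rcases eq_or_ne x 1 with rfl | hx1
    · norm_num
    field_simp [sub_ne_zero.mpr hx1, sub_ne_zero.mpr hx1.symm]
    ring
  rw [logRatio, hswap, abs_neg, logRatio]

lemma hasDerivAt_logRatio {x : ℝ} (hp : x + 1 ≠ 0) (hm : x - 1 ≠ 0) :
    HasDerivAt logRatio (1/(x + 1) - 1/(x - 1)) x := by
  have hquot := ((hasDerivAt_id' x).add_const 1).fun_div ((hasDerivAt_id' x).sub_const 1) hm
  refine ((hquot.log (div_ne_zero hp hm)).congr_deriv ?_).congr_of_eventuallyEq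
    (.of_forall fun y => log_abs _)
  field_simp

lemma mul_F2_one_div (t : ℝ) :
    t * F2 (1/t) = t^3/4 + 7*t/12 - (t^4 + 2*t^2 - 3)/8 * logRatio t := by
  rw [F2, ← logRatio, logRatio_one_div]
  rcases eq_or_ne t 0 with rfl | ht
  · simp [logRatio]
  field_simp
  ring

lemma mul_F1'_one_div (t : ℝ) :
    t * F1' (1/t) = t*(t^2 + 1)/2 * logRatio t - t^2 := by
  rw [F1', ← logRatio, logRatio_one_div]
  rcases eq_or_ne t 0 with rfl | ht
  · simp [logRatio]
  field_simp
  ring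

theorem stmt_10 (t : ℝ) (ht : 0 < t) (ht1 : t ≠ 1) :
    HasDerivAt (fun t => 4*t/3 - t * F2 (1/t)) (t * F1' (1/t)) t := by
  have hp : t + 1 ≠ 0 := by positivity
  have hm : t - 1 ≠ 0 := sub_ne_zero.mpr ht1
  have hexplicit : (fun t => 4*t/3 - t * F2 (1/t))
      = fun t => 3*t/4 - t^3/4 + (t^4 + 2*t^2 - 3)/8 * logRatio t := by
    funext t
    rw [mul_F2_one_div]
    ring
  have hpoly : HasDerivAt (fun t : ℝ => 3*t/4 - t^3/4) (3/4 - 3*t^2/4) t := by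
    refine ((((hasDerivAt_id' t).const_mul 3).div_const 4).sub
      ((hasDerivAt_pow 3 t).div_const 4)).congr_deriv ?_
    norm_num
  have hcoef : HasDerivAt (fun t : ℝ => (t^4 + 2*t^2 - 3)/8) ((4*t^3 + 4*t)/8) t := by
    refine ((((hasDerivAt_pow 4 t).add ((hasDerivAt_pow 2 t).const_mul 2)).sub_const 3).div_const
      8).congr_deriv ?_
    norm_num
    ring
  rw [hexplicit, mul_F1'_one_div]
  refine (hpoly.add (hcoef.mul (hasDerivAt_logRatio hp hm))).congr_deriv ?_
  field_simp
  ring
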